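/- arXiv:1201.5979 — 2 statements merged into one kernel-verified Lean document; each statement's English description precedes it below -/
import Mathlib

section
/- Let α ∈ ℂ be a nonzero constant. In the algebra of ℂ-linear endomorphisms of ℂ[x], let D be differentiation and X multiplication by x, and define the Dixmier operators L = (D² + X³ + α)² + 2X and M = (D² + X³ + α)³ + 3X∘D² + 3D + 3X∘(X³ + α). Then L and M commute: L∘M = M∘L. -/
open Polynomial

/-- The differentiation operator on `ℂ[x]`, as a `ℂ`-linear endomorphism. -/
noncomputable def Dop : Module.End ℂ (Polynomial ℂ) := Polynomial.derivative

/-- The operator of multiplication by `x` on `ℂ[x]`, as a `ℂ`-linear endomorphism. -/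
noncomputable def Xop : Module.End ℂ (Polynomial ℂ) := LinearMap.mulLeft ℂ Polynomial.X

/-- The Weyl relation `D∘X = X∘D + 1`. -/
lemma weyl_dx : Dop * Xop = Xop * Dop + 1 := by
  apply LinearMap.ext; intro p
  simp [Dop, Xop, Module.End.mul_apply, derivative_mul]
  ring

/-- Abstract commutation lemma in any ring, from the three basic relations. -/
lemma dixmier_key {R : Type*} [Ring R] (X D P : R)
    (h1 : P * X = X * P + 2 • D)
    (h2 : P * D = D * P - 3 • (X * X))
    (h3 : D * X = X * D + 1) :
    (P * P + 2 • X) * (P * P * P + 3 • (X * P + D))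
      = (P * P * P + 3 • (X * P + D)) * (P * P + 2 • X) := by
  have h1' : ∀ a : R, P * (X * a) = X * (P * a) + 2 • (D * a) := by
    intro a; rw [← mul_assoc, h1, add_mul, smul_mul_assoc, mul_assoc]
  have h2' : ∀ a : R, P * (D * a) = D * (P * a) - 3 • (X * (X * a)) := by
    intro a; rw [← mul_assoc, h2, sub_mul, smul_mul_assoc, mul_assoc, mul_assoc]
  have h3' : ∀ a : R, D * (X * a) = X * (D * a) + a := by
    intro a; rw [← mul_assoc, h3, add_mul, one_mul, mul_assoc]
  simp only [mul_add, add_mul, mul_sub, sub_mul, mul_assoc, smul_mul_assoc, mul_smul_comm,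
    smul_add, smul_sub, smul_smul, h1, h1', h2, h2', h3, h3']
  abel

/-- The Dixmier operators `L = (D² + X³ + α)² + 2X` and
`M = (D² + X³ + α)³ + 3X∘D² + 3D + 3X∘(X³ + α)` commute. -/
theorem dixmier_rank2_commutes (α : ℂ) (hα : α ≠ 0) :
    letI one : Module.End ℂ (Polynomial ℂ) := 1
    letI L : Module.End ℂ (Polynomial ℂ) :=
      (Dop ^ 2 + Xop ^ 3 + α • one) ^ 2 + 2 • Xop
    letI M : Module.End ℂ (Polynomial ℂ) :=
      (Dop ^ 2 + Xop ^ 3 + α • one) ^ 3 + 3 • (Xop * Dop ^ 2) + 3 • Dop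
        + 3 • (Xop * (Xop ^ 3 + α • one))
    L * M = M * L := by
  set P : Module.End ℂ (Polynomial ℂ) := Dop ^ 2 + Xop ^ 3 + α • (1 : Module.End ℂ (Polynomial ℂ)) with hP
  have dx' : ∀ a : Module.End ℂ (Polynomial ℂ), Dop * (Xop * a) = Xop * (Dop * a) + a := by
    intro a; rw [← mul_assoc, weyl_dx, add_mul, one_mul, mul_assoc]
  have h1 : P * Xop = Xop * P + 2 • Dop := by
    rw [hP]
    simp only [pow_two, pow_three, add_mul, mul_add, mul_assoc, smul_mul_assoc, mul_smul_comm,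
      one_mul, mul_one, weyl_dx, dx']
    module
  have h2 : P * Dop = Dop * P - 3 • (Xop * Xop) := by
    rw [hP]
    simp only [pow_two, pow_three, add_mul, mul_add, mul_assoc, smul_mul_assoc, mul_smul_comm,
      one_mul, mul_one, weyl_dx, dx']
    module
  have hL : (P : Module.End ℂ (Polynomial ℂ)) ^ 2 + 2 • Xop = P * P + 2 • Xop := by
    rw [pow_two]
  have hXP : Xop * P = Xop * Dop ^ 2 + Xop * (Xop ^ 3 + α • (1 : Module.End ℂ (Polynomial ℂ))) := by
    simp only [hP, mul_add, mul_smul_comm, mul_one]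
    abel
  have hM : (P : Module.End ℂ (Polynomial ℂ)) ^ 3 + 3 • (Xop * Dop ^ 2) + 3 • Dop
      + 3 • (Xop * (Xop ^ 3 + α • (1 : Module.End ℂ (Polynomial ℂ))))
      = P * P * P + 3 • (Xop * P + Dop) := by
    rw [pow_three, hXP, smul_add, smul_add]
    noncomm_ring
  rw [hL, hM]
  exact dixmier_key Xop Dop P h1 h2 weyl_dx
end

section
/- (Burchnall–Chaundy lemma, Weyl algebra form) Let L and M be two ordinary differential operators with polynomial coefficients, i.e. elements of the subalgebra of End(ℂ[x]) generated by D and X, each of positive order, and suppose L∘M = M∘L. Then L and M are algebraically dependent over ℂ: there exists a nonzero polynomial Q ∈ ℂ[λ, μ] in two commuting variables such that Q(L, M) = 0 in End(ℂ[x]). -/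
/-!
Measure the order of an operator `A` by commutators with `X`: `A` has order `≤ N` when
`ad_X^{N+1} A = 0`, and then `ad_X^N A` is multiplication by `N!` times the leading coefficient.
If `A` of order `N` commutes with `L` of order `n ≥ 1`, with leading coefficients `q` and `p`,
only two terms of the Leibniz expansion of `ad_X^{n+N-1} [L, A] = 0` survive, and they give
`n p q' = N q p'`. Any two such `q` therefore have vanishing Wronskian, so they are proportional,
and the operators of order `≤ N` commuting with `L` span a space of dimension `≤ N + 1`.
For `K = n + m` the `(K + 1)²` operators `L^i M^j` with `i, j ≤ K` commute with `L` and have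
order `≤ K²`; a linear relation between them is a nonzero `Q` with `Q(L, M) = 0`.
-/

open Polynomial Finset

/-- An endomorphism of `ℂ[x]` "has order `n`" if it can be written as
`Σ_{j=0}^{n} P_j(X)∘D^j` with polynomial coefficients `P_j` and `P_n ≠ 0`. -/
def HasOrder (A : Module.End ℂ (Polynomial ℂ)) (n : ℕ) : Prop :=
  ∃ P : ℕ → Polynomial ℂ, P n ≠ 0 ∧
    A = ∑ j ∈ Finset.range (n + 1), LinearMap.mulLeft ℂ (P j) * Dop ^ j

lemma linearIndependent_C_X_pow_mul_X_pow (R : Type*) [CommRing R] :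
    LinearIndependent R (fun ij : ℕ × ℕ ↦ C (X ^ ij.1 : R[X]) * X ^ ij.2) := by
  rw [linearIndependent_iff']
  intro s g hg ij hij
  have := congrArg (fun Q : R[X][X] ↦ (Q.coeff ij.2).coeff ij.1) hg
  simp only [finsetSum_coeff, coeff_smul, coeff_C_mul_X_pow] at this
  rw [sum_eq_single_of_mem ij hij fun x _ hx ↦ ?_] at this
  · simpa using this
  · split_ifs with h <;> simp [coeff_X_pow]
    exact fun h' ↦ absurd (Prod.ext h' h).symm hx

lemma exists_ne_zero_eval₂_eq_zero_of_not_linearIndependent {R A : Type*} [CommRing R] [Ring A]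
    [Algebra R A] (L M : A) (d : ℕ)
    (h : ¬ LinearIndependent R (fun ij : Fin d × Fin d ↦ L ^ (ij.1 : ℕ) * M ^ (ij.2 : ℕ))) :
    ∃ Q : R[X][X], Q ≠ 0 ∧ eval₂ (aeval L).toRingHom M Q = 0 := by
  obtain ⟨g, hg, ij, hij⟩ := Fintype.not_linearIndependent_iff.mp h
  have hmono := (linearIndependent_C_X_pow_mul_X_pow R).comp
    (fun ij : Fin d × Fin d ↦ ((ij.1 : ℕ), (ij.2 : ℕ))) fun a b hab ↦ by
      simp only [Prod.mk.injEq, Fin.val_inj] at hab; exact Prod.ext hab.1 hab.2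
  refine ⟨∑ ij, g ij • (C (X ^ (ij.1 : ℕ)) * X ^ (ij.2 : ℕ)),
    fun h0 ↦ hij (Fintype.linearIndependent_iff.mp hmono g h0 ij), ?_⟩
  rw [eval₂_finsetSum, ← hg]
  refine sum_congr rfl fun ij _ ↦ ?_
  rw [← smul_mul_assoc, smul_C, C_mul_X_pow_eq_monomial, eval₂_monomial]
  simp

section Wronskian

variable {K : Type*} [Field K] [CharZero K]

lemma exists_eq_smul_of_wronskian_eq_zero {p q : K[X]} (hp : p ≠ 0) (h : wronskian p q = 0) :
    ∃ c : K, q = c • p := by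
  classical
  have hgcd : gcd q p ≠ 0 := fun h0 ↦ hp ((gcd_eq_zero_iff q p).mp h0).2
  obtain ⟨g, a, b, hg, rfl, rfl, hab⟩ :
      ∃ g a b : K[X], g ≠ 0 ∧ p = g * a ∧ q = g * b ∧ IsCoprime a b :=
    ⟨gcd q p, p / gcd q p, q / gcd q p, hgcd,
      (EuclideanDomain.mul_div_cancel' hgcd (gcd_dvd_right q p)).symm,
      (EuclideanDomain.mul_div_cancel' hgcd (gcd_dvd_left q p)).symm,
      (isCoprime_div_gcd_div_gcd hp).symm⟩
  have hw : wronskian (g * a) (g * b) = g ^ 2 * wronskian a b := by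
    simp only [wronskian, derivative_mul]
    ring
  rw [hw, mul_eq_zero, or_iff_right (pow_ne_zero 2 hg), hab.wronskian_eq_zero_iff] at h
  rw [eq_C_of_derivative_eq_zero h.1] at hp ⊢
  rw [eq_C_of_derivative_eq_zero h.2]
  have ha : a.coeff 0 ≠ 0 := fun h0 ↦ hp (by rw [h0, C_0, mul_zero])
  refine ⟨b.coeff 0 / a.coeff 0, ?_⟩
  rw [smul_eq_C_mul, mul_left_comm, ← C_mul, div_mul_cancel₀ _ ha]

lemma wronskian_eq_zero_of_nsmul_mul_derivative_eq {p q₁ q₂ : K[X]} {n N : ℕ} (hp : p ≠ 0)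
    (hn : n ≠ 0) (h₁ : n • (p * derivative q₁) = N • (q₁ * derivative p))
    (h₂ : n • (p * derivative q₂) = N • (q₂ * derivative p)) : wronskian q₁ q₂ = 0 := by
  have : (n * p) * wronskian q₁ q₂ = 0 := by
    rw [nsmul_eq_mul, nsmul_eq_mul] at h₁ h₂
    rw [wronskian]
    linear_combination q₁ * h₂ - q₂ * h₁
  exact (mul_eq_zero.mp this).resolve_left (mul_ne_zero (by exact_mod_cast hn) hp)

lemma rank_le_one_of_wronskian_eq_zero (S : Submodule K K[X])
    (h : ∀ p ∈ S, ∀ q ∈ S, wronskian p q = 0) : Module.rank K S ≤ 1 := by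
  rw [rank_submodule_le_one_iff]
  by_cases hS : ∃ p ∈ S, p ≠ 0
  · obtain ⟨p, hpS, hp⟩ := hS
    refine ⟨p, hpS, fun q hq ↦ ?_⟩
    obtain ⟨c, rfl⟩ := exists_eq_smul_of_wronskian_eq_zero hp (h p hpS q hq)
    exact Submodule.smul_mem _ c (Submodule.mem_span_singleton_self p)
  · push Not at hS
    exact ⟨0, S.zero_mem, fun q hq ↦ by simp [hS q hq]⟩

end Wronskian

universe u

lemma rank_eq_rank_map_add_rank_inf_ker {K : Type*} {V W : Type u} [DivisionRing K]
    [AddCommGroup V] [Module K V] [AddCommGroup W] [Module K W] (f : V →ₗ[K] W)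
    (U : Submodule K V) :
    Module.rank K U = Module.rank K (U.map f) + Module.rank K ↥(U ⊓ LinearMap.ker f) := by
  rw [← LinearMap.range_domRestrict, ← (f.domRestrict U).rank_range_add_rank_ker,
    LinearMap.ker_domRestrict, ← Submodule.map_comap_subtype,
    rank_map_eq U.injective_subtype]

local notation "𝔼" => Module.End ℂ ℂ[X]

noncomputable def adX : Module.End ℂ 𝔼 :=
  LinearMap.mulRight ℂ Xop - LinearMap.mulLeft ℂ Xop

lemma adX_apply (A : 𝔼) : adX A = A * Xop - Xop * A := rfl

lemma adX_mul (A B : 𝔼) : adX (A * B) = A * adX B + adX A * B := by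
  simp only [adX_apply, mul_sub, sub_mul, mul_assoc]
  abel

lemma iterate_adX_mul (A B : 𝔼) (n : ℕ) :
    adX^[n] (A * B) =
      ∑ ij ∈ antidiagonal n, n.choose ij.1 • (adX^[ij.1] A * adX^[ij.2] B) := by
  induction n with
  | zero => simp
  | succ n ih =>
    rw [sum_antidiagonal_choose_succ_nsmul (M := 𝔼) (fun i j ↦ adX^[i] A * adX^[j] B) n]
    simp only [Function.iterate_succ_apply', ih, map_sum, map_nsmul, adX_mul, smul_add,
      sum_add_distrib, add_right_inj]
    refine sum_congr rfl fun ij hij ↦ ?_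
    rw [n.choose_symm_of_eq_add (mem_antidiagonal.1 hij).symm]

lemma iterate_adX_commutator (A B : 𝔼) (n : ℕ) :
    adX^[n] (A * B - B * A) = ∑ ij ∈ antidiagonal n,
      n.choose ij.1 • (adX^[ij.1] A * adX^[ij.2] B - adX^[ij.2] B * adX^[ij.1] A) := by
  rw [iterate_map_sub, iterate_adX_mul, iterate_adX_mul,
    ← Nat.sum_antidiagonal_swap (f := fun ij ↦ n.choose ij.1 • (adX^[ij.1] B * adX^[ij.2] A)),
    ← sum_sub_distrib]
  refine sum_congr rfl fun ij hij ↦ ?_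
  rw [smul_sub, Prod.fst_swap, Prod.snd_swap, n.choose_symm_of_eq_add (mem_antidiagonal.1 hij).symm]

lemma adX_mulLeft (p : ℂ[X]) : adX (LinearMap.mulLeft ℂ p) = 0 :=
  LinearMap.ext fun f ↦ by simp [adX_apply, Xop, mul_left_comm]

lemma adX_Dop_pow (j : ℕ) : adX (Dop ^ j) = j • Dop ^ (j - 1) :=
  LinearMap.ext fun f ↦ by
    simp [adX_apply, Xop, Dop, Module.End.pow_apply, iterate_derivative_mul_X, mul_comm X]

lemma iterate_adX_mulLeft_mul_Dop_pow (p : ℂ[X]) (j k : ℕ) :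
    adX^[k] (LinearMap.mulLeft ℂ p * Dop ^ j) =
      j.descFactorial k • (LinearMap.mulLeft ℂ p * Dop ^ (j - k)) := by
  induction k with
  | zero => simp
  | succ k ih =>
    rw [Function.iterate_succ_apply', ih, map_nsmul, adX_mul, adX_mulLeft, adX_Dop_pow, zero_mul,
      add_zero, mul_smul_comm, smul_smul, Nat.descFactorial_succ, Nat.sub_sub, mul_comm]

noncomputable def orderLE (N : ℕ) : Submodule ℂ 𝔼 := LinearMap.ker (adX ^ (N + 1))

lemma mem_orderLE_iff {A : 𝔼} {N : ℕ} : A ∈ orderLE N ↔ adX^[N + 1] A = 0 := by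
  rw [orderLE, LinearMap.mem_ker, Module.End.pow_apply]

lemma iterate_adX_eq_zero {A : 𝔼} {N k : ℕ} (hA : A ∈ orderLE N) (hk : N < k) :
    adX^[k] A = 0 := by
  obtain ⟨k, rfl⟩ := Nat.exists_eq_add_of_lt hk
  rw [show N + k + 1 = k + (N + 1) by omega, Function.iterate_add_apply, mem_orderLE_iff.mp hA,
    iterate_map_zero]

lemma mul_mem_orderLE {A B : 𝔼} {a b : ℕ} (hA : A ∈ orderLE a) (hB : B ∈ orderLE b) :
    A * B ∈ orderLE (a + b) := by
  rw [mem_orderLE_iff, iterate_adX_mul]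
  refine sum_eq_zero fun ij hij ↦ ?_
  have hij := HasAntidiagonal.mem_antidiagonal.mp hij
  rcases lt_or_ge a ij.1 with ha | ha
  · rw [iterate_adX_eq_zero hA ha, zero_mul, smul_zero]
  · rw [iterate_adX_eq_zero hB (by omega), mul_zero, smul_zero]

lemma pow_mem_orderLE {A : 𝔼} {a : ℕ} (hA : A ∈ orderLE a) (i : ℕ) :
    A ^ i ∈ orderLE (i * a) := by
  induction i with
  | zero => simp [mem_orderLE_iff, adX_apply]
  | succ i ih => simpa [pow_succ, add_mul] using mul_mem_orderLE ih hA

lemma orderLE_mono {a b : ℕ} (h : a ≤ b) : orderLE a ≤ orderLE b :=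
  fun _ hA ↦ mem_orderLE_iff.mpr (iterate_adX_eq_zero hA (by omega))

/-- For `A = Σ_{j ≤ N} P_j D^j` this is `N! • P_N`. -/
noncomputable def principalSymbol (N : ℕ) : 𝔼 →ₗ[ℂ] ℂ[X] :=
  LinearMap.applyₗ 1 ∘ₗ adX ^ N

lemma principalSymbol_apply (N : ℕ) (A : 𝔼) : principalSymbol N A = adX^[N] A 1 := by
  simp [principalSymbol, Module.End.pow_apply]

lemma eq_mulLeft_of_adX_eq_zero {E : 𝔼} (h : adX E = 0) :
    E = LinearMap.mulLeft ℂ (E 1) := by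
  have hX : ∀ f, E (X * f) = X * E f := fun f ↦ by
    simpa [adX_apply, Xop, sub_eq_zero] using LinearMap.congr_fun h f
  suffices ∀ g f : ℂ[X], E (g * f) = g * E f from
    LinearMap.ext fun g ↦ by simpa [mul_comm] using this g 1
  intro g f
  induction g using Polynomial.induction_on with
  | C a => simp [← smul_eq_C_mul]
  | add p q hp hq => simp [add_mul, hp, hq]
  | monomial k a ih =>
    rw [show C a * X ^ (k + 1) * f = X * (C a * X ^ k * f) by ring, hX, ih]
    ring

lemma iterate_adX_eq_mulLeft {A : 𝔼} {N : ℕ} (hA : A ∈ orderLE N) :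
    adX^[N] A = LinearMap.mulLeft ℂ (principalSymbol N A) := by
  rw [principalSymbol_apply]
  refine eq_mulLeft_of_adX_eq_zero ?_
  rw [← Function.iterate_succ_apply' adX, mem_orderLE_iff.mp hA]

lemma iterate_adX_eq_zero_of_principalSymbol_eq_zero {A : 𝔼} {N : ℕ} (hA : A ∈ orderLE N)
    (h : principalSymbol N A = 0) : adX^[N] A = 0 := by
  rw [iterate_adX_eq_mulLeft hA, h, LinearMap.mulLeft_zero_eq_zero]

lemma commutator_mulLeft_of_adX_eq {E : 𝔼} {p : ℂ[X]} (h : adX E = LinearMap.mulLeft ℂ p)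
    (q : ℂ[X]) :
    E * LinearMap.mulLeft ℂ q - LinearMap.mulLeft ℂ q * E =
      LinearMap.mulLeft ℂ (p * derivative q) := by
  have hE : adX (E - LinearMap.mulLeft ℂ p * Dop) = 0 := by
    rw [map_sub, adX_mul, adX_mulLeft, h, ← pow_one Dop, adX_Dop_pow]
    simp
  rw [sub_eq_iff_eq_add.mp (eq_mulLeft_of_adX_eq_zero hE)]
  refine LinearMap.ext fun f ↦ ?_
  simp [Dop, derivative_mul]
  ring

lemma iterate_adX_sum_mulLeft_mul_Dop_pow (P : ℕ → ℂ[X]) (n k : ℕ) :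
    adX^[k] (∑ j ∈ range (n + 1), LinearMap.mulLeft ℂ (P j) * Dop ^ j) =
      ∑ j ∈ range (n + 1),
        j.descFactorial k • (LinearMap.mulLeft ℂ (P j) * Dop ^ (j - k)) := by
  rw [← Module.End.pow_apply, map_sum]
  simp only [Module.End.pow_apply, iterate_adX_mulLeft_mul_Dop_pow]

lemma HasOrder.mem_orderLE {A : 𝔼} {n : ℕ} (h : HasOrder A n) : A ∈ orderLE n := by
  obtain ⟨P, -, rfl⟩ := h
  rw [mem_orderLE_iff, iterate_adX_sum_mulLeft_mul_Dop_pow]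
  refine sum_eq_zero fun j hj ↦ ?_
  rw [Nat.descFactorial_eq_zero_iff_lt.mpr (by simpa using hj), zero_smul]

lemma HasOrder.principalSymbol_ne_zero {A : 𝔼} {n : ℕ} (h : HasOrder A n) :
    principalSymbol n A ≠ 0 := by
  obtain ⟨P, hP, rfl⟩ := h
  rw [principalSymbol_apply, iterate_adX_sum_mulLeft_mul_Dop_pow, LinearMap.sum_apply,
    sum_eq_single n]
  · simpa [Nat.descFactorial_self, Nat.factorial_ne_zero] using hP
  · intro j hj hjn
    rw [Nat.descFactorial_eq_zero_iff_lt.mpr (by simp at hj; omega), zero_smul,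
      LinearMap.zero_apply]
  · simp

lemma iterate_adX_commutator_of_mem_orderLE {L A : 𝔼} {m N : ℕ} (hL : L ∈ orderLE (m + 1))
    (hA : A ∈ orderLE N) :
    adX^[m + N] (L * A - A * L) =
      (m + N).choose m • (adX^[m] L * adX^[N] A - adX^[N] A * adX^[m] L) +
      (m + N).choose (m + 1) •
        (adX^[m + 1] L * adX^[N - 1] A - adX^[N - 1] A * adX^[m + 1] L) := by
  rw [iterate_adX_commutator]
  refine sum_eq_add (m, N) (m + 1, N - 1) (by simp) (fun ij hij hne ↦ ?_) (by simp) fun h ↦ ?_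
  · have hij := HasAntidiagonal.mem_antidiagonal.mp hij
    rcases lt_or_ge (m + 1) ij.1 with h1 | h1
    · simp [iterate_adX_eq_zero hL h1]
    · have h2 : N < ij.2 := by
        simp only [ne_eq, Prod.ext_iff] at hne
        omega
      simp [iterate_adX_eq_zero hA h2]
  · rw [Nat.choose_eq_zero_of_lt (by simp at h; omega), zero_smul]

theorem nsmul_principalSymbol_mul_derivative_eq {L A : 𝔼} {n N : ℕ} (hn : 0 < n)
    (hL : L ∈ orderLE n) (hA : A ∈ orderLE N) (h : L * A = A * L) :
    n • (principalSymbol n L * derivative (principalSymbol N A)) =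
      N • (principalSymbol N A * derivative (principalSymbol n L)) := by
  obtain ⟨m, rfl⟩ := Nat.exists_eq_add_of_lt hn
  rw [zero_add] at hL ⊢
  set p := principalSymbol (m + 1) L
  set q := principalSymbol N A
  have hfirst : adX^[m] L * adX^[N] A - adX^[N] A * adX^[m] L =
      LinearMap.mulLeft ℂ (p * derivative q) := by
    rw [iterate_adX_eq_mulLeft hA]
    exact commutator_mulLeft_of_adX_eq (by rw [← Function.iterate_succ_apply' adX,
      iterate_adX_eq_mulLeft hL]) q
  -- for `N = 0` the binomial coefficient vanishes, so the truncated `N - 1` does no harm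
  have hsecond : (m + N).choose (m + 1) •
      (adX^[m + 1] L * adX^[N - 1] A - adX^[N - 1] A * adX^[m + 1] L) =
        -((m + N).choose (m + 1) • LinearMap.mulLeft ℂ (q * derivative p)) := by
    rcases N with _ | N
    · simp
    · rw [iterate_adX_eq_mulLeft hL, ← neg_sub, smul_neg, Nat.add_sub_cancel]
      congr 2
      exact commutator_mulLeft_of_adX_eq (by rw [← Function.iterate_succ_apply' adX,
        iterate_adX_eq_mulLeft hA]) p
  have hvanish := iterate_adX_commutator_of_mem_orderLE hL hA
  rw [h, sub_self, iterate_map_zero, hfirst, hsecond, ← sub_eq_add_neg, eq_comm,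
    sub_eq_zero] at hvanish
  have hcoeff : (m + N).choose m • (p * derivative q) =
      (m + N).choose (m + 1) • (q * derivative p) := by
    simpa using LinearMap.congr_fun hvanish 1
  have hchoose : (m + N).choose (m + 1) * (m + 1) = (m + N).choose m * N := by
    rw [Nat.choose_succ_right_eq, Nat.add_sub_cancel_left]
  refine smul_right_injective ℂ[X] (Nat.choose_pos (Nat.le_add_right m N)).ne' ?_
  simp only [smul_smul]
  rw [mul_comm _ (m + 1), ← smul_smul, hcoeff, smul_smul, mul_comm (m + 1), hchoose]

noncomputable def centralizerOrderLE (L : 𝔼) (N : ℕ) : Submodule ℂ 𝔼 :=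
  orderLE N ⊓ Subalgebra.toSubmodule (Subalgebra.centralizer ℂ {L})

lemma mem_centralizerOrderLE {L A : 𝔼} {N : ℕ} :
    A ∈ centralizerOrderLE L N ↔ A ∈ orderLE N ∧ L * A = A * L := by
  simp [centralizerOrderLE, Subalgebra.mem_centralizer_iff]

lemma rank_map_principalSymbol_le_one {L : 𝔼} {n : ℕ} (hn : 0 < n) (hL : L ∈ orderLE n)
    (hp : principalSymbol n L ≠ 0) (N : ℕ) :
    Module.rank ℂ ↥((centralizerOrderLE L N).map (principalSymbol N)) ≤ 1 := by
  refine rank_le_one_of_wronskian_eq_zero _ ?_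
  rintro _ ⟨A₁, hA₁, rfl⟩ _ ⟨A₂, hA₂, rfl⟩
  rw [SetLike.mem_coe, mem_centralizerOrderLE] at hA₁ hA₂
  exact wronskian_eq_zero_of_nsmul_mul_derivative_eq hp hn.ne'
    (nsmul_principalSymbol_mul_derivative_eq hn hL hA₁.1 hA₁.2)
    (nsmul_principalSymbol_mul_derivative_eq hn hL hA₂.1 hA₂.2)

theorem rank_centralizerOrderLE_le {L : 𝔼} {n : ℕ} (hn : 0 < n) (hL : L ∈ orderLE n)
    (hp : principalSymbol n L ≠ 0) (N : ℕ) :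
    Module.rank ℂ (centralizerOrderLE L N) ≤ N + 1 := by
  rw [rank_eq_rank_map_add_rank_inf_ker (principalSymbol N), add_comm (N : Cardinal)]
  refine add_le_add (rank_map_principalSymbol_le_one hn hL hp N) ?_
  have hker : ∀ A ∈ centralizerOrderLE L N ⊓ LinearMap.ker (principalSymbol N),
      adX^[N] A = 0 ∧ L * A = A * L := fun A hA ↦ by
    rw [Submodule.mem_inf, mem_centralizerOrderLE, LinearMap.mem_ker] at hA
    exact ⟨iterate_adX_eq_zero_of_principalSymbol_eq_zero hA.1.1 hA.2, hA.1.2⟩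
  cases N with
  | zero =>
    refine (Submodule.rank_mono fun A hA ↦ ?_).trans (rank_bot ℂ 𝔼).le
    exact (hker A hA).1
  | succ N =>
    refine (Submodule.rank_mono fun A hA ↦ ?_).trans
      ((rank_centralizerOrderLE_le hn hL hp N).trans_eq (Nat.cast_succ N).symm)
    exact mem_centralizerOrderLE.mpr ⟨mem_orderLE_iff.mpr (hker A hA).1, (hker A hA).2⟩

theorem burchnall_chaundy_general (L M : Module.End ℂ (Polynomial ℂ))
    (hLord : ∃ n, 0 < n ∧ HasOrder L n)
    (hMord : ∃ n, 0 < n ∧ HasOrder M n)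
    (hcomm : L * M = M * L) :
    ∃ Q : Polynomial (Polynomial ℂ), Q ≠ 0 ∧
      Polynomial.eval₂ (Polynomial.aeval L).toRingHom M Q = 0 := by
  obtain ⟨n, hn, hL⟩ := hLord
  obtain ⟨m, -, hM⟩ := hMord
  generalize hK : n + m = K
  refine exists_ne_zero_eval₂_eq_zero_of_not_linearIndependent L M (K + 1) fun hli ↦ ?_
  have hmem (ij : Fin (K + 1) × Fin (K + 1)) :
      L ^ (ij.1 : ℕ) * M ^ (ij.2 : ℕ) ∈ centralizerOrderLE L (K * K) := by
    have hi := Nat.mul_le_mul_right n ij.1.is_le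
    have hj := Nat.mul_le_mul_right m ij.2.is_le
    have hKK : K * K = K * n + K * m := by rw [← hK]; ring
    refine mem_centralizerOrderLE.mpr ⟨orderLE_mono (by linarith) (mul_mem_orderLE
      (pow_mem_orderLE hL.mem_orderLE _) (pow_mem_orderLE hM.mem_orderLE _)), ?_⟩
    exact ((Commute.refl L).pow_right _).mul_right (Commute.pow_right hcomm _)
  have hli' : LinearIndependent ℂ fun ij ↦ (⟨_, hmem ij⟩ : centralizerOrderLE L (K * K)) :=
    LinearIndependent.of_comp (centralizerOrderLE L (K * K)).subtype hli
  have hcard := hli'.cardinal_le_rank.trans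
    (rank_centralizerOrderLE_le hn hL.mem_orderLE hL.principalSymbol_ne_zero (K * K))
  simp only [Cardinal.mk_fintype, Fintype.card_prod, Fintype.card_fin] at hcard
  norm_cast at hcard
  nlinarith

/-- (Burchnall–Chaundy lemma, Weyl algebra form) If `L` and `M` are commuting
ordinary differential operators with polynomial coefficients (elements of the
subalgebra of `End(ℂ[x])` generated by `D` and `X`), each of positive order,
then they are algebraically dependent over `ℂ`: there is a nonzero polynomial
`Q(λ, μ)` (here an element of `ℂ[λ][μ]`) with `Q(L, M) = 0`, where evaluation
substitutes `L` for `λ` and `M` for `μ`. -/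
theorem burchnall_chaundy (L M : Module.End ℂ (Polynomial ℂ))
    (hL : L ∈ Algebra.adjoin ℂ ({Dop, Xop} : Set (Module.End ℂ (Polynomial ℂ))))
    (hM : M ∈ Algebra.adjoin ℂ ({Dop, Xop} : Set (Module.End ℂ (Polynomial ℂ))))
    (hLord : ∃ n, 0 < n ∧ HasOrder L n)
    (hMord : ∃ n, 0 < n ∧ HasOrder M n)
    (hcomm : L * M = M * L) :
    ∃ Q : Polynomial (Polynomial ℂ), Q ≠ 0 ∧
      Polynomial.eval₂ (Polynomial.aeval L).toRingHom M Q = 0 :=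
  burchnall_chaundy_general L M hLord hMord hcomm
end
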